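/- arXiv:1506.01458 — 2 statements merged into one kernel-verified Lean document; each statement's English description precedes it below -/
import Mathlib

section
/- Let G be a finite group of characteristic p and P a p-subgroup of G. Then the centralizer C_G(P) is of characteristic p. -/
variable (p : ℕ) (G : Type*) [Group G]

/-- `O_p(G)`: the join of all normal `p`-subgroups of `G` (the largest normal `p`-subgroup
when `G` is finite). -/
def pCore : Subgroup G :=
  ⨆ H : {H : Subgroup G // H.Normal ∧ IsPGroup p H}, H.1

/-- `O_{p'}(G)`: the join of all normal subgroups of order coprime to `p` (the largest normal
`p'`-subgroup when `G` is finite). -/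
def pPrimeCore : Subgroup G :=
  ⨆ H : {H : Subgroup G // H.Normal ∧ Nat.Coprime (Nat.card H) p}, H.1

lemma iSup_normal {G : Type*} [Group G] {ι : Sort*} (H : ι → Subgroup G)
    (h : ∀ i, (H i).Normal) : (⨆ i, H i).Normal := by
  constructor
  intro n hn g
  refine Subgroup.iSup_induction (C := fun x => g * x * g⁻¹ ∈ ⨆ i, H i) H hn
    (fun i x hx => ?_) ?_ (fun x y hx hy => ?_)
  · exact Subgroup.mem_iSup_of_mem i ((h i).conj_mem x hx g)
  · simpa using Subgroup.one_mem (⨆ i, H i)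
  · have e : g * (x * y) * g⁻¹ = (g * x * g⁻¹) * (g * y * g⁻¹) := by group
    show g * (x * y) * g⁻¹ ∈ ⨆ i, H i
    rw [e]; exact mul_mem hx hy

instance pCore_normal : (pCore p G).Normal := iSup_normal _ (fun i => i.2.1)

instance pPrimeCore_normal : (pPrimeCore p G).Normal := iSup_normal _ (fun i => i.2.1)

/-- A group `G` is of characteristic `p` if `C_G(O_p(G)) ≤ O_p(G)`. -/
def IsCharP : Prop :=
  Subgroup.centralizer ((pCore p G : Subgroup G) : Set G) ≤ pCore p G

/-- A group `G` is almost of characteristic `p` if `G/O_{p'}(G)` is of characteristic `p`. -/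
def IsAlmostCharP : Prop := IsCharP p (G ⧸ pPrimeCore p G)

/-!
Let `Q = O_p(G)` and `C = C_G(P)`. As `C_Q(P)` is a normal `p`-subgroup of `C`, every element `y`
of `C_C(O_p(C))` centralizes `C_Q(P)`. If `y` is a `p'`-element, Thompson's `A × B` lemma (for
the commuting `p`-group `P` and `p'`-group `⟨y⟩`, both normalizing `Q`) shows that `y` centralizes
`Q`, hence `y ∈ Q`, hence `y = 1`. So `C_C(O_p(C))` is a normal `p`-subgroup of `C`, i.e. lies in
`O_p(C)`.

For the `A × B` lemma, let `K = C_{QP}(Y) ⊇ P`. If `K < QP`, the normalizer condition in the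
`p`-group `QP` yields `q ∈ Q \ K` normalizing `K`, so `[q, P] ⊆ K`. The three subgroups lemma then
gives `[Y, q] ⊆ C_Q(P) ⊆ C(Y)`, and a commutator `c = [y, q]` commuting with `y` satisfies
`c ^ |y| = [y ^ |y|, q] = 1`; being also a `p`-element, `c = 1`. Thus `q ∈ K`, a contradiction.
-/

open Subgroup
open scoped commutatorElement

section

variable {p : ℕ} {G : Type*} [Group G]

theorem isPGroup_pCore : IsPGroup p (pCore p G) :=
  have : ∀ H : {H : Subgroup G // H.Normal ∧ IsPGroup p H}, H.1.Normal := fun H => H.2.1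
  Sylow.iSup_of_normal _ fun H => H.2.2

theorem le_pCore {N : Subgroup G} [hN : N.Normal] (hNp : IsPGroup p N) : N ≤ pCore p G :=
  le_iSup (fun H : {H : Subgroup G // H.Normal ∧ IsPGroup p H} => H.1) ⟨N, hN, hNp⟩

theorem subgroupOf_pCore_le_pCore (H : Subgroup G) : (pCore p G).subgroupOf H ≤ pCore p H :=
  have := (pCore_normal p G).subgroupOf H
  le_pCore isPGroup_pCore.comap_subtype

theorem IsPGroup.eq_one_of_coprime_orderOf {Q : Subgroup G} (hQ : IsPGroup p Q) {g : G}
    (hgQ : g ∈ Q) (hg : (orderOf g).Coprime p) : g = 1 := by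
  obtain ⟨k, hk⟩ := hQ ⟨g, hgQ⟩
  refine orderOf_eq_one_iff.mp (Nat.eq_one_of_dvd_coprimes (hg.pow_right k) dvd_rfl ?_)
  exact orderOf_mk g hgQ ▸ orderOf_dvd_of_pow_eq_one hk

theorem isPGroup_of_forall_coprime_orderOf_eq_one [hp : Fact p.Prime] [Finite G]
    (h : ∀ g : G, (orderOf g).Coprime p → g = 1) : IsPGroup p G := by
  intro g
  refine ⟨(orderOf g).factorization p, h _ ?_⟩
  rw [orderOf_pow, Nat.gcd_eq_right (Nat.ordProj_dvd _ _)]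
  exact (Nat.coprime_ordCompl hp.out (orderOf_pos g).ne').symm

theorem commutatorElement_pow_of_commute {y q : G} (h : Commute ⁅y, q⁆ y) (n : ℕ) :
    ⁅y, q⁆ ^ n = ⁅y ^ n, q⁆ := by
  induction n with
  | zero => simp
  | succ n ih =>
    calc ⁅y, q⁆ ^ (n + 1) = y ^ n * ⁅y, q⁆ * (y ^ n)⁻¹ * ⁅y ^ n, q⁆ := by
          rw [pow_succ', ← ih, (h.pow_right n).symm.eq, mul_inv_cancel_right]
      _ = ⁅y ^ (n + 1), q⁆ := by simp only [commutatorElement_def]; group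

theorem exists_mem_normalizer_notMem_of_lt {S K : Subgroup G} [Group.IsNilpotent S]
    (hKS : K < S) : ∃ n ∈ S, n ∈ normalizer (K : Set G) ∧ n ∉ K := by
  have hlt : K.subgroupOf S < ⊤ := by
    rw [lt_top_iff_ne_top, Ne, subgroupOf_eq_top]
    exact hKS.not_ge
  obtain ⟨n, hnN, hnK⟩ := SetLike.exists_of_lt (Group.normalizerCondition_of_isNilpotent _ hlt)
  rw [← subgroupOf_normalizer_eq hKS.le, mem_subgroupOf] at hnN
  exact ⟨n, n.2, hnN, fun h => hnK (mem_subgroupOf.mpr h)⟩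

variable {P Q Y : Subgroup G}

theorem le_centralizer_of_commutator_le (hQ : IsPGroup p Q) (hY : (Nat.card Y).Coprime p)
    (hYQ : Y ≤ normalizer (Q : Set G)) (hPY : P ≤ centralizer (Y : Set G))
    (h : Q ⊓ centralizer (P : Set G) ≤ centralizer (Y : Set G)) {N : Subgroup G} (hNQ : N ≤ Q)
    (hNP : ⁅N, P⁆ ≤ centralizer (Y : Set G)) : N ≤ centralizer (Y : Set G) := by
  have hYN : ⁅Y, N⁆ ≤ centralizer (P : Set G) := by
    rw [← commutator_eq_bot_iff_le_centralizer]
    apply commutator_commutator_eq_bot_of_rotate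
    · exact commutator_eq_bot_iff_le_centralizer.mpr hNP
    · rw [commutator_eq_bot_iff_le_centralizer.mpr hPY, commutator_bot_left]
  rw [le_centralizer_iff]
  intro y hy
  rw [mem_centralizer_iff]
  intro n hn
  have hcQ : ⁅y, n⁆ ∈ Q := by
    rw [commutatorElement_def]
    exact mul_mem ((mem_normalizer_iff.mp (hYQ hy) n).mp (hNQ hn)) (inv_mem (hNQ hn))
  have hcy : Commute ⁅y, n⁆ y :=
    (mem_centralizer_iff.mp (h ⟨hcQ, hYN (commutator_mem_commutator hy hn)⟩) y hy).symm
  have hc_dvd : orderOf ⁅y, n⁆ ∣ Nat.card Y := by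
    refine (orderOf_dvd_of_pow_eq_one ?_).trans (Y.orderOf_dvd_natCard hy)
    rw [commutatorElement_pow_of_commute hcy, pow_orderOf_eq_one, commutatorElement_one_left]
  have hc : ⁅y, n⁆ = 1 := hQ.eq_one_of_coprime_orderOf hcQ (hY.coprime_dvd_left hc_dvd)
  exact (commutatorElement_eq_one_iff_mul_comm.mp hc).symm

theorem le_centralizer_of_inf_centralizer_le [Fact p.Prime] [Finite G] (hP : IsPGroup p P)
    (hQ : IsPGroup p Q) (hY : (Nat.card Y).Coprime p) (hPQ : P ≤ normalizer (Q : Set G))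
    (hYQ : Y ≤ normalizer (Q : Set G)) (hPY : P ≤ centralizer (Y : Set G))
    (h : Q ⊓ centralizer (P : Set G) ≤ centralizer (Y : Set G)) :
    Q ≤ centralizer (Y : Set G) := by
  set K := (Q ⊔ P) ⊓ centralizer (Y : Set G)
  have hPK : P ≤ K := le_inf le_sup_right hPY
  have hNK : Q ⊓ normalizer (K : Set G) ≤ centralizer (Y : Set G) := by
    refine le_centralizer_of_commutator_le hQ hY hYQ hPY h inf_le_left ?_
    refine commutator_le.mpr fun n hn g hg => (inf_le_right : K ≤ _) ?_
    rw [commutatorElement_def]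
    exact mul_mem ((mem_normalizer_iff.mp hn.2 g).mp (hPK hg)) (inv_mem (hPK hg))
  by_contra hQY
  have hKlt : K < Q ⊔ P :=
    inf_le_left.lt_of_ne fun hK => hQY (le_sup_left.trans (hK ▸ inf_le_right))
  have := (hQ.to_sup_of_normal_left' hP hPQ).isNilpotent
  obtain ⟨n, hnS, hnN, hnK⟩ := exists_mem_normalizer_notMem_of_lt hKlt
  rw [← SetLike.mem_coe, coe_mul_of_right_le_normalizer_left Q P hPQ] at hnS
  obtain ⟨q, hq, g, hg, rfl⟩ := hnS
  have hqN : q ∈ normalizer (K : Set G) := by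
    simpa using mul_mem hnN (inv_mem (le_normalizer (hPK hg)))
  have hqK : q ∈ K := ⟨mem_sup_left hq, hNK ⟨hq, hqN⟩⟩
  exact hnK (mul_mem hqK (hPK hg))

end

/-- If `G` is a finite group of characteristic `p` and `P` is a `p`-subgroup of `G`, then
`C_G(P)` is of characteristic `p`. -/
theorem isCharP_centralizer (p : ℕ) [Fact p.Prime] (G : Type*) [Group G] [Finite G]
    (hG : IsCharP p G) (P : Subgroup G) (hP : IsPGroup p P) :
    IsCharP p (Subgroup.centralizer (P : Set G)) := by
  set C := centralizer (P : Set G)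
  refine le_pCore (isPGroup_of_forall_coprime_orderOf_eq_one fun x hx => ?_)
  set y : G := ((x : C) : G)
  rw [← orderOf_coe, ← orderOf_coe] at hx
  have hyC : y ∈ centralizer (pCore p G ⊓ C : Set G) := by
    intro z hz
    have hzC : (⟨z, hz.2⟩ : C) ∈ pCore p C :=
      subgroupOf_pCore_le_pCore C (mem_subgroupOf.mpr hz.1)
    exact congrArg Subtype.val (mem_centralizer_iff.mp x.2 _ hzC)
  have hQy : pCore p G ≤ centralizer (zpowers y : Set G) :=
    le_centralizer_of_inf_centralizer_le hP isPGroup_pCore (Nat.card_zpowers y ▸ hx)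
      le_normalizer_of_normal le_normalizer_of_normal
      (le_centralizer_iff.mpr (zpowers_le.mpr (x : C).2))
      (le_centralizer_iff.mpr (zpowers_le.mpr hyC))
  have hy : y ∈ pCore p G := hG (zpowers_le.mp (le_centralizer_iff.mp hQy))
  exact Subtype.ext (Subtype.ext (isPGroup_pCore.eq_one_of_coprime_orderOf hy hx))
end

section
/- Let G be a finite group with a normal p-subgroup P such that the centralizer C_G(P) is a p-group. Then G is of characteristic p. -/
/- `C_G(O_p(G))` is normal, being the centralizer of a normal subgroup, and it is a `p`-group,
being contained in `C_G(P)` since `P ≤ O_p(G)`. Hence it is one of the normal `p`-subgroups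
whose join is `O_p(G)`. -/

variable (p : ℕ) (G : Type*) [Group G]

theorem le_pCore_s7 {p : ℕ} {G : Type*} [Group G] (H : Subgroup G) [H.Normal]
    (hH : IsPGroup p H) : H ≤ pCore p G :=
  le_iSup (fun K : {K : Subgroup G // K.Normal ∧ IsPGroup p K} => K.1) ⟨H, ‹_›, hH⟩

theorem isCharP_of_centralizer_pGroup_general (p : ℕ) (G : Type*) [Group G]
    (P : Subgroup G) [P.Normal] (hP : IsPGroup p P)
    (hC : IsPGroup p (Subgroup.centralizer (P : Set G))) :
    IsCharP p G :=
  le_pCore_s7 _ (hC.to_le (Subgroup.centralizer_le (le_pCore_s7 P hP)))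

/-- If a finite group `G` has a normal `p`-subgroup `P` with `C_G(P)` a `p`-group, then `G` is
of characteristic `p`. -/
theorem isCharP_of_centralizer_pGroup (p : ℕ) [Fact p.Prime] (G : Type*) [Group G] [Finite G]
    (P : Subgroup G) [P.Normal] (hP : IsPGroup p P)
    (hC : IsPGroup p (Subgroup.centralizer (P : Set G))) :
    IsCharP p G :=
  isCharP_of_centralizer_pGroup_general p G P hP hC
end
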